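/- arXiv:1510.05162 — 2 statements merged into one kernel-verified Lean document; each statement's English description precedes it below -/
import Mathlib

section
/- Let V be a valuation algebra, x a formula and H ∈ V, and write x ⋄ H = ⟨(u₁, b₁), …, (uₙ, bₙ)⟩ for the evaluation path of x at H. Then for each 1 ≤ i ≤ n, bᵢ = uᵢ / (u_{i-1} • … • u₁ • H); in particular the i-th recorded truth value is the evaluation of the i-th recorded atom in the valuation obtained from H by applying the derivatives of the preceding recorded atoms. -/
/-- Formulas over a set of atoms `A`: x ::= T | a | ¬x | x ∧ y. -/
inductive Fm (A : Type) : Type where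
  | tru : Fm A
  | atom : A → Fm A
  | neg : Fm A → Fm A
  | con : Fm A → Fm A → Fm A

/-- Trees over `A`: X ::= T | F | X ⊴ a ⊵ X. -/
inductive Tr (A : Type) : Type where
  | tt : Tr A
  | ff : Tr A
  | node : Tr A → A → Tr A → Tr A

namespace Tr

/-- The substitution X[T ↦ Y, F ↦ Z]. -/
def subst {A : Type} : Tr A → Tr A → Tr A → Tr A
  | tt, Y, _ => Y
  | ff, _, Z => Z
  | node l a r, Y, Z => node (subst l Y Z) a (subst r Y Z)

/-- All leaves of the tree are T. -/
def closedT {A : Type} : Tr A → Prop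
  | tt => True
  | ff => False
  | node l _ r => closedT l ∧ closedT r

/-- All leaves of the tree are F. -/
def closedF {A : Type} : Tr A → Prop
  | tt => False
  | ff => True
  | node l _ r => closedF l ∧ closedF r

/-- A tree is open if it is neither closed by T nor closed by F. -/
def IsOpen {A : Type} (X : Tr A) : Prop := ¬ closedT X ∧ ¬ closedF X

/-- The tree has at least one T leaf. -/
def hasT {A : Type} : Tr A → Prop
  | tt => True
  | ff => False
  | node l _ r => hasT l ∨ hasT r

/-- The tree has at least one F leaf. -/
def hasF {A : Type} : Tr A → Prop
  | tt => False
  | ff => True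
  | node l _ r => hasF l ∨ hasF r

end Tr

/-- A formula is constant-free if it contains no occurrence of T. -/
def Fm.constFree {A : Type} : Fm A → Prop
  | .tru => False
  | .atom _ => True
  | .neg x => x.constFree
  | .con x y => x.constFree ∧ y.constFree

/-- The short-circuit evaluation tree of a formula. -/
def se {A : Type} : Fm A → Tr A
  | .tru => .tt
  | .atom a => .node .tt a .ff
  | .neg x => (se x).subst .ff .tt
  | .con x y => (se x).subst (se y) .ff

/-- A valuation algebra: a nonempty set of valuations together with an
evaluation `/ : 𝒜 × V → Bool` and a derivative `• : 𝒜 × V → V`. -/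
structure ValAlg (A : Type) : Type 1 where
  V : Type
  nonempty : Nonempty V
  eval : A → V → Bool
  deriv : A → V → V

/-!
The evaluation path of `x ∧ y` at `H` is that of `x` followed, when `x/H = T`, by that of `y`
at `x•H`; and applying the derivatives of the atoms along `x ⋄ H` to `H` yields exactly `x•H`.
So the claimed consistency of a path is preserved under this concatenation, and induction on
`x` goes through.
-/

namespace ValAlg

variable {A : Type}

/-- Simultaneous extension of evaluation and derivative to formulas:
`ev u x H = (x/H, x•H)`. -/
def ev (u : ValAlg A) : Fm A → u.V → Bool × u.V
  | .tru, H => (true, H)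
  | .atom a, H => (u.eval a H, u.deriv a H)
  | .neg x, H => ((u.ev x H).1.not, (u.ev x H).2)
  | .con x y, H => if (u.ev x H).1 then u.ev y (u.ev x H).2 else (false, (u.ev x H).2)

/-- The evaluation `x/H` of a formula. -/
def fEval (u : ValAlg A) (x : Fm A) (H : u.V) : Bool := (u.ev x H).1

/-- The derivative `x•H` of a formula. -/
def fDeriv (u : ValAlg A) (x : Fm A) (H : u.V) : u.V := (u.ev x H).2

/-- Repetition-proof valuation algebra: a/(a•H) = a/H. -/
def RepProof (u : ValAlg A) : Prop :=
  ∀ a H, u.eval a (u.deriv a H) = u.eval a H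

/-- Contractive: repetition-proof and a•a•H = a•H. -/
def Contractive (u : ValAlg A) : Prop :=
  u.RepProof ∧ ∀ a H, u.deriv a (u.deriv a H) = u.deriv a H

/-- Memorizing: contractive and a/(b•a•H) = a/H, a•b•a•H = b•a•H. -/
def Memorizing (u : ValAlg A) : Prop :=
  u.Contractive ∧
    (∀ a b H, u.eval a (u.deriv b (u.deriv a H)) = u.eval a H) ∧
    (∀ a b H, u.deriv a (u.deriv b (u.deriv a H)) = u.deriv b (u.deriv a H))

/-- Static: memorizing and a/(b•H) = a/H. -/
def Static (u : ValAlg A) : Prop :=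
  u.Memorizing ∧ ∀ a b H, u.eval a (u.deriv b H) = u.eval a H

end ValAlg

/-- Valuation congruence with respect to a valuation algebra. -/
def VCongr {A : Type} (u : ValAlg A) (x y : Fm A) : Prop :=
  ∀ H : u.V, u.fEval x H = u.fEval y H ∧ u.fDeriv x H = u.fDeriv y H

/-- Satisfiability w.r.t. all valuation algebras. -/
def SATfr {A : Type} (x : Fm A) : Prop :=
  ∃ u : ValAlg A, ∃ H : u.V, u.fEval x H = true

/-- Satisfiability w.r.t. repetition-proof valuation algebras. -/
def SATrp {A : Type} (x : Fm A) : Prop :=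
  ∃ u : ValAlg A, u.RepProof ∧ ∃ H : u.V, u.fEval x H = true

/-- Satisfiability w.r.t. contractive valuation algebras. -/
def SATcn {A : Type} (x : Fm A) : Prop :=
  ∃ u : ValAlg A, u.Contractive ∧ ∃ H : u.V, u.fEval x H = true

/-- Satisfiability w.r.t. memorizing valuation algebras. -/
def SATmem {A : Type} (x : Fm A) : Prop :=
  ∃ u : ValAlg A, u.Memorizing ∧ ∃ H : u.V, u.fEval x H = true

/-- Satisfiability w.r.t. static valuation algebras. -/
def SATst {A : Type} (x : Fm A) : Prop :=
  ∃ u : ValAlg A, u.Static ∧ ∃ H : u.V, u.fEval x H = true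

/-- A valuation path: a finite sequence of pairs in 𝒜 × {T, F}. -/
abbrev VPath (A : Type) := List (A × Bool)

/-- The (partial) result `P : X` of a valuation path on a tree. -/
def result {A : Type} [DecidableEq A] : VPath A → Tr A → Option Bool
  | [], .tt => some true
  | [], .ff => some false
  | (u, b) :: Q, .node X₁ a X₂ =>
      if u = a then (if b then result Q X₁ else result Q X₂) else none
  | _ :: _, .tt => none
  | _ :: _, .ff => none
  | [], .node _ _ _ => none

/-- A path is repetition-proof if equal adjacent atoms carry equal values. -/
def RepProofPath {A : Type} : VPath A → Prop
  | (u, b) :: (v, c) :: t => (u = v → b = c) ∧ RepProofPath ((v, c) :: t)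
  | _ => True

/-- A path is memorizing if equal atoms anywhere carry equal values. -/
def MemPath {A : Type} (P : VPath A) : Prop :=
  ∀ u b c, (u, b) ∈ P → (u, c) ∈ P → b = c

/-- Free path-satisfiability. -/
def PathSatFr {A : Type} [DecidableEq A] (x : Fm A) : Prop :=
  ∃ P : VPath A, result P (se x) = some true

/-- Rp-path-satisfiability. -/
def PathSatRp {A : Type} [DecidableEq A] (x : Fm A) : Prop :=
  ∃ P : VPath A, RepProofPath P ∧ result P (se x) = some true

/-- Mem-path-satisfiability. -/
def PathSatMem {A : Type} [DecidableEq A] (x : Fm A) : Prop :=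
  ∃ P : VPath A, MemPath P ∧ result P (se x) = some true

/-- Free path-falsifiability. -/
def PathFalFr {A : Type} [DecidableEq A] (x : Fm A) : Prop :=
  ∃ P : VPath A, result P (se x) = some false

/-- The evaluation path `x ⋄ H`. -/
def ValAlg.epath {A : Type} (u : ValAlg A) : Fm A → u.V → VPath A
  | .tru, _ => []
  | .atom a, H => [(a, u.eval a H)]
  | .neg x, H => u.epath x H
  | .con x y, H =>
      if u.fEval x H then u.epath x H ++ u.epath y (u.fDeriv x H) else u.epath x H

/-- `lastIdx a P k` is the largest 1-based index `i ≤ min k |P|` with `uᵢ = a`,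
or 0 if no such index exists. -/
def lastIdx {A : Type} [DecidableEq A] (a : A) (P : VPath A) : ℕ → ℕ
  | 0 => 0
  | k + 1 => if (P[k]?).map Prod.fst = some a then k + 1 else lastIdx a P k

/-- The norm-based constructor `va`; the valuation `i : Fin (|P| + 1)`
represents the 1-based valuation `i + 1` of the paper. -/
def va {A : Type} [DecidableEq A] (P : VPath A) : ValAlg A where
  V := Fin (P.length + 1)
  nonempty := ⟨0⟩
  eval a i :=
    match lastIdx a P (i.1 + 1) with
    | 0 => false
    | j + 1 => ((P[j]?).map Prod.snd).getD false
  deriv a i :=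
    if h : i.1 < P.length ∧ (P[i.1]?).map Prod.fst = some a
    then ⟨i.1 + 1, by omega⟩ else i

/-- Helper for contraction: `cnAux a Q` drops leading repetitions of `a`. -/
def cnAux {A : Type} [DecidableEq A] : A → VPath A → VPath A
  | _, [] => []
  | a, (u, b) :: Q => if u = a then cnAux a Q else (u, b) :: cnAux u Q

/-- The contraction of a valuation path. -/
def cn {A : Type} [DecidableEq A] : VPath A → VPath A
  | [] => []
  | (u, b) :: Q => (u, b) :: cnAux u Q

/-- The norm-based constructor `sva`, a trivial valuation algebra. -/
def sva {A : Type} [DecidableEq A] (P : VPath A) : ValAlg A where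
  V := PUnit
  nonempty := ⟨PUnit.unit⟩
  eval a _ := decide ((a, true) ∈ P)
  deriv _ H := H

/-!
The evaluation path of `x ∧ y` at `H` is that of `x` followed, when `x/H = T`, by that of `y`
at `x•H`; and applying the derivatives of the atoms along `x ⋄ H` to `H` yields exactly `x•H`.
So the claimed consistency of a path is preserved under this concatenation, and induction on
`x` goes through.
-/

namespace ValAlg

variable {A : Type} (u : ValAlg A)

/-- `u.derivPath P H` is `uₙ • … • u₁ • H` for `P = ⟨(u₁, b₁), …, (uₙ, bₙ)⟩`. -/
def derivPath (P : VPath A) (H : u.V) : u.V :=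
  P.foldl (fun G p => u.deriv p.1 G) H

def PathConsistent (P : VPath A) (H : u.V) : Prop :=
  ∀ (i : ℕ) (h : i < P.length),
    (P.get ⟨i, h⟩).2 = u.eval (P.get ⟨i, h⟩).1 (u.derivPath (P.take i) H)

theorem derivPath_append (P Q : VPath A) (H : u.V) :
    u.derivPath (P ++ Q) H = u.derivPath Q (u.derivPath P H) :=
  List.foldl_append

theorem fDeriv_con (x y : Fm A) (H : u.V) :
    u.fDeriv (.con x y) H = if u.fEval x H then u.fDeriv y (u.fDeriv x H) else u.fDeriv x H := by
  simp only [fDeriv, fEval, ev]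
  split <;> simp_all

theorem derivPath_epath (x : Fm A) (H : u.V) : u.derivPath (u.epath x H) H = u.fDeriv x H := by
  induction x generalizing H with
  | tru => rfl
  | atom a => rfl
  | neg x ih => exact ih H
  | con x y ihx ihy =>
    simp only [epath, fDeriv_con]
    split
    · rw [derivPath_append, ihx, ihy]
    · exact ihx H

variable {u} in
theorem PathConsistent.append {P Q : VPath A} {H : u.V} (hP : u.PathConsistent P H)
    (hQ : u.PathConsistent Q (u.derivPath P H)) : u.PathConsistent (P ++ Q) H := by
  intro i h
  simp only [List.get_eq_getElem, List.getElem_append]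
  split_ifs with hi
  · rw [List.take_append_of_le_length hi.le]
    exact hP i hi
  · rw [List.take_append, List.take_of_length_le (by omega), derivPath_append]
    exact hQ (i - P.length) (by simp at h; omega)

theorem pathConsistent_epath (x : Fm A) (H : u.V) : u.PathConsistent (u.epath x H) H := by
  induction x generalizing H with
  | tru => intro i h; simp [epath] at h
  | atom a =>
    intro i h
    obtain rfl : i = 0 := by simpa [epath] using h
    rfl
  | neg x ih => exact ih H
  | con x y ihx ihy =>
    simp only [epath]
    split
    · exact (ihx H).append (u.derivPath_epath x H ▸ ihy _)
    · exact ihx H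

end ValAlg

/-- In the evaluation path `x ⋄ H = ⟨(u₁,b₁),…,(uₙ,bₙ)⟩`, each
`bᵢ` equals `uᵢ / (u_{i-1} • … • u₁ • H)`. -/
theorem stmt_14 {A : Type} (u : ValAlg A) (x : Fm A) (H : u.V) :
    ∀ (i : ℕ) (h : i < (u.epath x H).length),
      ((u.epath x H).get ⟨i, h⟩).2 =
        u.eval ((u.epath x H).get ⟨i, h⟩).1
          (((u.epath x H).take i).foldl (fun G p => u.deriv p.1 G) H) :=
  u.pathConsistent_epath x H
end

section
/- Let V be a valuation algebra. Then for every formula x and every H ∈ V, the result of the evaluation path x ⋄ H on the tree se(x) equals the evaluation of x at H; that is, (x ⋄ H) : se(x) = x/H. -/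
/-! Induction on the formula: `se` of a compound formula is a substitution instance of `se x`,
and its evaluation path extends `x ⋄ H`, so the path that `x ⋄ H` leads to the leaf `x/H` of
`se x` continues into the subtree substituted for that leaf. -/

theorem Tr.result_append_subst {A : Type} [DecidableEq A] {X : Tr A} {P : VPath A} {b : Bool}
    (hP : result P X = some b) (Q : VPath A) (Y Z : Tr A) :
    result (P ++ Q) (X.subst Y Z) = result Q (bif b then Y else Z) := by
  induction X generalizing P with
  | tt => cases P <;> simp_all [result, Tr.subst]
  | ff => cases P <;> simp_all [result, Tr.subst]
  | node l a r ihl ihr =>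
    obtain _ | ⟨⟨v, c⟩, P⟩ := P
    · simp [result] at hP
    obtain rfl : v = a := by
      by_contra hv
      simp [result, hv] at hP
    cases c
    · simpa [result, Tr.subst] using ihr (by simpa [result] using hP)
    · simpa [result, Tr.subst] using ihl (by simpa [result] using hP)

namespace ValAlg

variable {A : Type} (u : ValAlg A)

theorem fEval_neg (x : Fm A) (H : u.V) : u.fEval (.neg x) H = !u.fEval x H := rfl

theorem fEval_con (x y : Fm A) (H : u.V) :
    u.fEval (.con x y) H = (u.fEval x H && u.fEval y (u.fDeriv x H)) := by
  simp only [fEval, fDeriv, ev]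
  cases (u.ev x H).1 <;> rfl

theorem epath_con (x y : Fm A) (H : u.V) :
    u.epath (.con x y) H =
      u.epath x H ++ bif u.fEval x H then u.epath y (u.fDeriv x H) else [] := by
  simp only [epath]
  cases u.fEval x H <;> simp

end ValAlg

/-- `(x ⋄ H) : se x = x/H`. -/
theorem stmt_15 {A : Type} [DecidableEq A] (u : ValAlg A) (x : Fm A) (H : u.V) :
    result (u.epath x H) (se x) = some (u.fEval x H) := by
  induction x generalizing H with
  | tru => rfl
  | atom a =>
    change result [(a, u.eval a H)] (.node .tt a .ff) = some (u.eval a H)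
    cases u.eval a H <;> simp [result]
  | neg x ih =>
    have h := Tr.result_append_subst (ih H) [] .ff .tt
    rw [List.append_nil] at h
    rw [ValAlg.epath, se, h, ValAlg.fEval_neg]
    cases u.fEval x H <;> rfl
  | con x y ihx ihy =>
    rw [ValAlg.epath_con, se, Tr.result_append_subst (ihx H), ValAlg.fEval_con]
    cases u.fEval x H
    · rfl
    · exact ihy _
end
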